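/- Let β and γ be real numbers with 0 ≤ γ ≤ β < 1 and β + γ > 1. Then there is a constant C = C(β,γ) such that for all k₁, k₂ ∈ ℤ one has ∑_{n∈ℤ} ⟨n-k₁⟩^{-β} ⟨n-k₂⟩^{-γ} ≤ C ⟨k₁-k₂⟩^{1-β-γ}. -/

import Mathlib

/-- Japanese bracket `⟨x⟩ = (1+x²)^{1/2}`. -/
noncomputable def jb (x : ℝ) : ℝ := Real.sqrt (1 + x ^ 2)

/-!
Write `x = ⟨n - k₂⟩`, `y = ⟨n - k₁⟩` and `K = ⟨k₁ - k₂⟩`. Then `K ≤ x + y`, so the larger of `x`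
and `y` is at least `K / 2`, and since `γ ≤ β` the summand `y^{-β} x^{-γ}` is at most `φ x + φ y`
for the decreasing weight `φ t = t^{-β} max(t, K/2)^{-γ}`. Comparing a lattice sum of `φ` with
its integral, each of the two resulting sums is at most
`3 ∫₀^∞ φ = 3 (1/(1-β) + 1/(β+γ-1)) (K/2)^{1-β-γ}`.
-/

open Real Set MeasureTheory
open scoped ENNReal

lemma one_le_jb (x : ℝ) : 1 ≤ jb x :=
  Real.one_le_sqrt.2 (by nlinarith)

lemma jb_pos (x : ℝ) : 0 < jb x :=
  one_pos.trans_le (one_le_jb x)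

lemma abs_le_jb (x : ℝ) : |x| ≤ jb x :=
  Real.abs_le_sqrt (by linarith)

lemma jb_le_jb_add_abs_sub (x y : ℝ) : jb x ≤ jb y + |x - y| := by
  have hy : y ^ 2 + 1 = jb y ^ 2 := by rw [jb, sq_sqrt (by positivity)]; ring
  have hcross : y * (x - y) ≤ jb y * |x - y| :=
    (le_abs_self _).trans ((abs_mul y (x - y)).trans_le
      (mul_le_mul_of_nonneg_right (abs_le_jb y) (abs_nonneg _)))
  refine Real.sqrt_le_iff.2 ⟨by linarith [one_le_jb y, abs_nonneg (x - y)], ?_⟩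
  nlinarith [sq_abs (x - y)]

lemma jb_sub_le_add (a b c : ℝ) : jb (a - b) ≤ jb (c - b) + jb (c - a) := by
  have h := jb_le_jb_add_abs_sub (a - b) (c - b)
  rw [show a - b - (c - b) = -(c - a) by ring, abs_neg] at h
  linarith [abs_le_jb (c - a)]

lemma rpow_neg_mul_rpow_neg_le {x y β γ : ℝ} (hx : 0 < x) (hxy : x ≤ y) (hγβ : γ ≤ β) :
    y ^ (-β) * x ^ (-γ) ≤ x ^ (-β) * y ^ (-γ) := by
  have hy : 0 < y := hx.trans_le hxy
  have hpow : y ^ (γ - β) ≤ x ^ (γ - β) := rpow_le_rpow_of_nonpos hx hxy (by linarith)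
  calc y ^ (-β) * x ^ (-γ) = y ^ (γ - β) * (x ^ (-γ) * y ^ (-γ)) := by
        rw [show -β = (γ - β) + -γ by ring, rpow_add hy]; ring
    _ ≤ x ^ (γ - β) * (x ^ (-γ) * y ^ (-γ)) := by gcongr
    _ = x ^ (-β) * y ^ (-γ) := by
        rw [← mul_assoc, ← rpow_add hx, show γ - β + -γ = -β by ring]

lemma rpow_neg_mul_rpow_neg_le_add {x y K β γ : ℝ} (hx : 0 < x) (hy : 0 < y) (hK : K ≤ x + y)
    (hγ : 0 ≤ γ) (hγβ : γ ≤ β) :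
    y ^ (-β) * x ^ (-γ) ≤
      x ^ (-β) * max x (K / 2) ^ (-γ) + y ^ (-β) * max y (K / 2) ^ (-γ) := by
  rcases le_total x y with hxy | hyx
  · have : y ^ (-γ) ≤ max x (K / 2) ^ (-γ) :=
      rpow_le_rpow_of_nonpos (by positivity) (max_le hxy (by linarith)) (by linarith)
    calc y ^ (-β) * x ^ (-γ) ≤ x ^ (-β) * y ^ (-γ) := rpow_neg_mul_rpow_neg_le hx hxy hγβ
      _ ≤ x ^ (-β) * max x (K / 2) ^ (-γ) := by gcongr
      _ ≤ _ := le_add_of_nonneg_right (mul_nonneg (rpow_nonneg hy.le _)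
          (rpow_nonneg (hy.le.trans (le_max_left _ _)) _))
  · have : x ^ (-γ) ≤ max y (K / 2) ^ (-γ) :=
      rpow_le_rpow_of_nonpos (by positivity) (max_le hyx (by linarith)) (by linarith)
    calc y ^ (-β) * x ^ (-γ) ≤ y ^ (-β) * max y (K / 2) ^ (-γ) := by gcongr
      _ ≤ _ := le_add_of_nonneg_left (mul_nonneg (rpow_nonneg hx.le _)
          (rpow_nonneg (hx.le.trans (le_max_left _ _)) _))

lemma antitoneOn_rpow_neg_mul_max_rpow_neg {β γ R : ℝ} (hβ : 0 ≤ β) (hγ : 0 ≤ γ) :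
    AntitoneOn (fun t : ℝ => t ^ (-β) * max t R ^ (-γ)) (Ioi 0) := by
  intro s (hs : 0 < s) t (ht : 0 < t) hst
  exact mul_le_mul (rpow_le_rpow_of_nonpos hs hst (by linarith))
    (rpow_le_rpow_of_nonpos (lt_max_of_lt_left hs) (max_le_max_right R hst) (by linarith))
    (rpow_nonneg (ht.le.trans (le_max_left t R)) _) (rpow_nonneg hs.le _)

lemma tsum_le_setLIntegral_Ioi_zero {g : ℝ → ℝ≥0∞} (hg : AntitoneOn g (Ioi 0)) :
    ∑' j : ℕ, g (j + 1) ≤ ∫⁻ t in Ioi 0, g t := by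
  have hdisj : Pairwise (Function.onFun Disjoint fun j : ℕ => Ioc (j : ℝ) (j + 1)) := by
    intro i j hij
    rw [Function.onFun, Set.Ioc_disjoint_Ioc]
    rcases Nat.lt_or_gt_of_ne hij with h | h
    · have : (i : ℝ) + 1 ≤ j := by exact_mod_cast h
      exact (min_le_left _ _).trans (this.trans (le_max_right _ _))
    · have : (j : ℝ) + 1 ≤ i := by exact_mod_cast h
      exact (min_le_right _ _).trans (this.trans (le_max_left _ _))
  calc ∑' j : ℕ, g (j + 1) ≤ ∑' j : ℕ, ∫⁻ t in Ioc (j : ℝ) (j + 1), g t := by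
        refine ENNReal.tsum_le_tsum fun j => ?_
        calc g (j + 1) = ∫⁻ _ in Ioc (j : ℝ) (j + 1), g (j + 1) := by simp
          _ ≤ ∫⁻ t in Ioc (j : ℝ) (j + 1), g t :=
            setLIntegral_mono' measurableSet_Ioc fun t ht =>
              hg ((Nat.cast_nonneg j).trans_lt ht.1) (show (0 : ℝ) < j + 1 by positivity) ht.2
    _ = ∫⁻ t in ⋃ j : ℕ, Ioc (j : ℝ) (j + 1), g t :=
        (lintegral_iUnion (fun _ => measurableSet_Ioc) hdisj _).symm
    _ ≤ ∫⁻ t in Ioi 0, g t :=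
        lintegral_mono_set (iUnion_subset fun j => Ioc_subset_Ioi_self.trans
          (Ioi_subset_Ioi (Nat.cast_nonneg j)))

lemma tsum_int_comp_jb_sub_le {g : ℝ → ℝ≥0∞} (hg : AntitoneOn g (Ioi 0)) (k : ℤ) :
    ∑' n : ℤ, g (jb (n - k)) ≤ 3 * ∑' j : ℕ, g (j + 1) := by
  have hshift : ∑' n : ℤ, g (jb (n - k)) = ∑' n : ℤ, g (jb n) := by
    simpa using (Equiv.subRight k).tsum_eq fun n : ℤ => g (jb n)
  have hle : ∀ (j : ℕ) (x : ℝ), (j : ℝ) + 1 ≤ |x| → g (jb x) ≤ g (j + 1) := fun j x hx =>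
    hg (show (0 : ℝ) < j + 1 by positivity) (jb_pos x) (hx.trans (abs_le_jb x))
  have hzero : g (jb 0) ≤ ∑' j : ℕ, g (j + 1) := by
    simpa [jb] using ENNReal.le_tsum (f := fun j : ℕ => g (j + 1)) 0
  have hpos : ∑' j : ℕ, g (jb ((j + 1 : ℕ) : ℤ)) ≤ ∑' j : ℕ, g (j + 1) :=
    ENNReal.tsum_le_tsum fun j => hle j _ (by push_cast; rw [abs_of_nonneg (by positivity)])
  have hneg : ∑' j : ℕ, g (jb ((-(j + 1) : ℤ) : ℝ)) ≤ ∑' j : ℕ, g (j + 1) :=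
    ENNReal.tsum_le_tsum fun j => hle j _ (by
      push_cast; rw [abs_neg, abs_of_nonneg (by positivity)])
  rw [hshift, tsum_of_nat_of_neg_add_one ENNReal.summable ENNReal.summable,
    tsum_eq_zero_add' ENNReal.summable]
  calc _ ≤ ∑' j : ℕ, g (j + 1) + ∑' j : ℕ, g (j + 1) + ∑' j : ℕ, g (j + 1) :=
        add_le_add (add_le_add (by simpa using hzero) hpos) hneg
    _ = 3 * ∑' j : ℕ, g (j + 1) := by ring

lemma setLIntegral_Ioc_zero_rpow {r R : ℝ} (hr : -1 < r) (hR : 0 ≤ R) :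
    ∫⁻ t in Ioc 0 R, ENNReal.ofReal (t ^ r) = ENNReal.ofReal (R ^ (r + 1) / (r + 1)) := by
  rw [← ofReal_integral_eq_lintegral_ofReal (intervalIntegral.intervalIntegrable_rpow' hr).1
      ((ae_restrict_iff' measurableSet_Ioc).2 (.of_forall fun t ht => rpow_nonneg ht.1.le r)),
    ← intervalIntegral.integral_of_le hR, integral_rpow (.inl hr),
    zero_rpow (by linarith), sub_zero]

lemma setLIntegral_Ioi_rpow {r R : ℝ} (hr : r < -1) (hR : 0 < R) :
    ∫⁻ t in Ioi R, ENNReal.ofReal (t ^ r) = ENNReal.ofReal (-R ^ (r + 1) / (r + 1)) := by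
  rw [← ofReal_integral_eq_lintegral_ofReal (integrableOn_Ioi_rpow_of_lt hr hR)
      ((ae_restrict_iff' measurableSet_Ioi).2
        (.of_forall fun t ht => rpow_nonneg (hR.trans ht).le r)),
    integral_Ioi_rpow_of_lt hr hR]

lemma setLIntegral_Ioi_zero_rpow_neg_mul_max_rpow_neg {β γ R : ℝ} (hR : 0 < R) (hβ : β < 1)
    (hβγ : 1 < β + γ) :
    ∫⁻ t in Ioi 0, ENNReal.ofReal (t ^ (-β) * max t R ^ (-γ)) =
      ENNReal.ofReal ((1 / (1 - β) + 1 / (β + γ - 1)) * R ^ (1 - β - γ)) := by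
  have hsmall : ∫⁻ t in Ioc 0 R, ENNReal.ofReal (t ^ (-β) * max t R ^ (-γ)) =
      ENNReal.ofReal (R ^ (-γ)) * ∫⁻ t in Ioc 0 R, ENNReal.ofReal (t ^ (-β)) := by
    rw [← lintegral_const_mul' _ _ ENNReal.ofReal_ne_top]
    refine setLIntegral_congr_fun measurableSet_Ioc fun t ht => ?_
    rw [max_eq_right ht.2, ← ENNReal.ofReal_mul (rpow_nonneg hR.le _), mul_comm]
  have hlarge : ∫⁻ t in Ioi R, ENNReal.ofReal (t ^ (-β) * max t R ^ (-γ)) =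
      ∫⁻ t in Ioi R, ENNReal.ofReal (t ^ (-(β + γ))) := by
    refine setLIntegral_congr_fun measurableSet_Ioi fun t (ht : R < t) => ?_
    rw [max_eq_left ht.le, ← rpow_add (hR.trans ht), neg_add]
  have hpow : R ^ (-(β + γ) + 1) = R ^ (-γ) * R ^ (-β + 1) := by
    rw [← rpow_add hR]; ring_nf
  have h₁ : -β + 1 ≠ 0 := by linarith
  have h₂ : -(β + γ) + 1 < 0 := by linarith
  have h₃ : 1 - β ≠ 0 := by linarith
  have h₄ : β + γ - 1 ≠ 0 := by linarith
  have hA := rpow_pos_of_pos hR (-γ)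
  have hB := rpow_pos_of_pos hR (-β + 1)
  rw [← Ioc_union_Ioi_eq_Ioi hR.le, lintegral_union measurableSet_Ioi Ioc_disjoint_Ioi_same,
    hsmall, hlarge, setLIntegral_Ioc_zero_rpow (by linarith) hR.le,
    setLIntegral_Ioi_rpow (by linarith) hR, ← ENNReal.ofReal_mul hA.le, hpow,
    ← ENNReal.ofReal_add (mul_nonneg hA.le (div_nonneg hB.le (by linarith)))
      (div_nonneg_of_nonpos (by nlinarith) h₂.le),
    show 1 - β - γ = -(β + γ) + 1 by ring, hpow]
  congr 1
  have := h₂.ne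
  field_simp
  ring

lemma tsum_rpow_neg_jb_sub_mul_max_le {β γ R : ℝ} (hR : 0 < R) (hβ₀ : 0 ≤ β) (hγ : 0 ≤ γ)
    (hβ : β < 1) (hβγ : 1 < β + γ) (k : ℤ) :
    ∑' n : ℤ, ENNReal.ofReal (jb (n - k) ^ (-β) * max (jb (n - k)) R ^ (-γ)) ≤
      ENNReal.ofReal (3 * (1 / (1 - β) + 1 / (β + γ - 1)) * R ^ (1 - β - γ)) := by
  have hanti := ENNReal.ofReal_mono.comp_antitoneOn
    (antitoneOn_rpow_neg_mul_max_rpow_neg (R := R) hβ₀ hγ)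
  calc _ ≤ 3 * ∑' j : ℕ, ENNReal.ofReal (((j : ℝ) + 1) ^ (-β) * max ((j : ℝ) + 1) R ^ (-γ)) :=
        tsum_int_comp_jb_sub_le hanti k
    _ ≤ 3 * ∫⁻ t in Ioi 0, ENNReal.ofReal (t ^ (-β) * max t R ^ (-γ)) := by
        gcongr
        exact tsum_le_setLIntegral_Ioi_zero hanti
    _ = _ := by
        rw [setLIntegral_Ioi_zero_rpow_neg_mul_max_rpow_neg hR hβ hβγ, mul_assoc,
          ENNReal.ofReal_mul (by norm_num : (0 : ℝ) ≤ 3), ENNReal.ofReal_ofNat]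

/-- For `0 ≤ γ ≤ β < 1` with `β + γ > 1`, there is `C = C(β,γ)` such that
for all `k₁ k₂ : ℤ`, `∑_{n∈ℤ} ⟨n-k₁⟩^{-β} ⟨n-k₂⟩^{-γ} ≤ C ⟨k₁-k₂⟩^{1-β-γ}`. -/
theorem stmt2 (β γ : ℝ) (hγ0 : 0 ≤ γ) (hγβ : γ ≤ β) (hβ1 : β < 1) (hβγ : 1 < β + γ) :
    ∃ C : ℝ, 0 < C ∧ ∀ k₁ k₂ : ℤ,
      (∑' n : ℤ, ENNReal.ofReal
          (jb ((n : ℝ) - (k₁ : ℝ)) ^ (-β) * jb ((n : ℝ) - (k₂ : ℝ)) ^ (-γ)))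
        ≤ ENNReal.ofReal (C * jb ((k₁ : ℝ) - (k₂ : ℝ)) ^ (1 - β - γ)) := by
  have h₁ : 0 < 1 - β := by linarith
  have h₂ : 0 < β + γ - 1 := by linarith
  refine ⟨6 * (1 / (1 - β) + 1 / (β + γ - 1)) * 2 ^ (β + γ - 1), by positivity,
    fun k₁ k₂ => ?_⟩
  set K := jb (k₁ - k₂)
  have hK : 0 < K := jb_pos _
  have hpt : ∀ n : ℤ, ENNReal.ofReal (jb (n - k₁) ^ (-β) * jb (n - k₂) ^ (-γ)) ≤
      ENNReal.ofReal (jb (n - k₂) ^ (-β) * max (jb (n - k₂)) (K / 2) ^ (-γ)) +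
        ENNReal.ofReal (jb (n - k₁) ^ (-β) * max (jb (n - k₁)) (K / 2) ^ (-γ)) := fun n =>
    (ENNReal.ofReal_le_ofReal (rpow_neg_mul_rpow_neg_le_add (jb_pos _) (jb_pos _)
      (jb_sub_le_add _ _ _) hγ0 hγβ)).trans ENNReal.ofReal_add_le
  have hsum := tsum_rpow_neg_jb_sub_mul_max_le (half_pos hK) (hγ0.trans hγβ) hγ0 hβ1 hβγ
  have hhalf : (K / 2) ^ (1 - β - γ) = 2 ^ (β + γ - 1) * K ^ (1 - β - γ) := by
    rw [div_rpow hK.le zero_le_two, show β + γ - 1 = -(1 - β - γ) by ring,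
      rpow_neg zero_le_two, div_eq_inv_mul]
  calc _ ≤ _ := ENNReal.tsum_le_tsum hpt
    _ = _ := ENNReal.tsum_add
    _ ≤ _ := add_le_add (hsum k₂) (hsum k₁)
    _ = _ := by
        rw [← ENNReal.ofReal_add (by positivity) (by positivity), hhalf]
        ring_nf
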